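/- arXiv:2411.05101 — 3 statements merged into one kernel-verified Lean document; each statement's English description precedes it below -/
import Mathlib

section
/- The five-element algebra B satisfies every equation that is valid in the algebra ℕ₀ = ⟨ℕ₀; +, ·, ↑, ©, !, exp2, 0, 1⟩ (with 0↑0 = 1): for all L-terms s, t in m variables, if s and t evaluate equally under every assignment of the variables into ℕ₀, then s and t evaluate equally under every assignment of the variables into B. -/
/-- Terms in the signature L = {+, ·, ↑, ©, !, exp2, 0, 1} in `m` variables. -/
inductive ETerm (m : ℕ) : Type
  | var : Fin m → ETerm m
  | zero : ETerm m
  | one : ETerm m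
  | add : ETerm m → ETerm m → ETerm m
  | mul : ETerm m → ETerm m → ETerm m
  | pow : ETerm m → ETerm m → ETerm m
  | cc : ETerm m → ETerm m → ETerm m
  | fact : ETerm m → ETerm m
  | exp2 : ETerm m → ETerm m

/-- Evaluation over ℕ₀ (with 0↑0 = 1, x©y = binomial(x+y,y), exp2(x) = 2^x). -/
def ETerm.evalN {m : ℕ} (φ : Fin m → ℕ) : ETerm m → ℕ
  | .var i => φ i
  | .zero => 0
  | .one => 1
  | .add s t => s.evalN φ + t.evalN φ
  | .mul s t => s.evalN φ * t.evalN φ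
  | .pow s t => (s.evalN φ) ^ (t.evalN φ)
  | .cc s t => Nat.choose (s.evalN φ + t.evalN φ) (t.evalN φ)
  | .fact s => Nat.factorial (s.evalN φ)
  | .exp2 s => 2 ^ (s.evalN φ)

/-- The five-element universe {0, 1, 2, a, ∞} of the algebra B. -/
inductive B5 : Type
  | e0 | e1 | e2 | ea | einf
  deriving DecidableEq

namespace B5

def add : B5 → B5 → B5
  | e0, x => x
  | x, e0 => x
  | e1, e1 => e2
  | e1, e2 => e2
  | e2, e1 => e2
  | e2, e2 => e2
  | ea, ea => ea
  | _, _ => einf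

def mul : B5 → B5 → B5
  | e0, _ => e0
  | _, e0 => e0
  | e1, x => x
  | x, e1 => x
  | e2, e2 => e2
  | e2, ea => ea
  | ea, e2 => ea
  | _, _ => einf

def pow : B5 → B5 → B5
  | _, e0 => e1
  | e0, _ => e0
  | e1, _ => e1
  | x, e1 => x
  | e2, e2 => e2
  | _, _ => einf

def cc : B5 → B5 → B5
  | _, e0 => e1
  | e0, _ => e1
  | e1, e1 => e2
  | e1, e2 => e2
  | e2, e1 => e2
  | e2, e2 => e2
  | _, _ => einf

def fact : B5 → B5
  | e0 => e1
  | e1 => e1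
  | e2 => e2
  | ea => einf
  | einf => einf

def exp2 : B5 → B5
  | e0 => e1
  | e1 => e2
  | e2 => e2
  | ea => einf
  | einf => einf

end B5

/-- Evaluation of L-terms in the five-element algebra B. -/
def ETerm.evalB {m : ℕ} (φ : Fin m → B5) : ETerm m → B5
  | .var i => φ i
  | .zero => B5.e0
  | .one => B5.e1
  | .add s t => B5.add (s.evalB φ) (t.evalB φ)
  | .mul s t => B5.mul (s.evalB φ) (t.evalB φ)
  | .pow s t => B5.pow (s.evalB φ) (t.evalB φ)
  | .cc s t => B5.cc (s.evalB φ) (t.evalB φ)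
  | .fact s => B5.fact (s.evalB φ)
  | .exp2 s => B5.exp2 (s.evalB φ)

namespace Stmt1Aux

/-- `P n` holds for all sufficiently large `n`. -/
def Ev (P : ℕ → Prop) : Prop := ∃ N, ∀ n, N ≤ n → P n

lemma Ev.mono {P Q : ℕ → Prop} (h : ∀ n, P n → Q n) : Ev P → Ev Q
  | ⟨N, hN⟩ => ⟨N, fun n hn => h n (hN n hn)⟩

lemma ev_ge (M : ℕ) : Ev (fun n => M ≤ n) := ⟨M, fun _ hn => hn⟩

lemma Ev.comb2 {P Q R : ℕ → Prop} (hp : Ev P) (hq : Ev Q)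
    (h : ∀ n, P n → Q n → R n) : Ev R := by
  obtain ⟨N1, h1⟩ := hp; obtain ⟨N2, h2⟩ := hq
  exact ⟨max N1 N2, fun n hn => h n (h1 n (le_trans (le_max_left _ _) hn))
    (h2 n (le_trans (le_max_right _ _) hn))⟩

lemma Ev.comb3 {P Q R S : ℕ → Prop} (hp : Ev P) (hq : Ev Q) (hr : Ev R)
    (h : ∀ n, P n → Q n → R n → S n) : Ev S :=
  (hp.comb2 (hq.comb2 hr (fun _ a b => And.intro a b))) (fun n a hbc => h n a hbc.1 hbc.2)

/-- eventually affine: `g n = c * n + k`. -/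
def Aff (c k : ℕ) (g : ℕ → ℕ) : Prop := Ev (fun n => g n = c * n + k)

/-- superlinear growth. -/
def Big (g : ℕ → ℕ) : Prop := ∀ C, Ev (fun n => C * n ≤ g n)

/-- The class of sequences assigned to each element of B. -/
def Cls : B5 → (ℕ → ℕ) → Prop
  | .e0 => Aff 0 0
  | .e1 => Aff 0 1
  | .e2 => fun g => ∃ k, 2 ≤ k ∧ Aff 0 k g
  | .ea => fun g => ∃ c, 1 ≤ c ∧ Aff c 0 g
  | .einf => fun g => (∃ c k, 1 ≤ c ∧ 1 ≤ k ∧ Aff c k g) ∨ Big g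

/-! ### basic facts -/

lemma aff_congr {c k g h} (hg : Aff c k g) (he : Ev (fun n => g n = h n)) : Aff c k h :=
  hg.comb2 he (fun n e1 e2 => by rw [← e2, e1])

lemma big_congr {g h} (hg : Big g) (he : Ev (fun n => g n = h n)) : Big h :=
  fun C => (hg C).comb2 he (fun n e1 e2 => e2 ▸ e1)

lemma cls_congr {x g h} (hg : Cls x g) (he : Ev (fun n => g n = h n)) : Cls x h := by
  cases x with
  | e0 => exact aff_congr hg he
  | e1 => exact aff_congr hg he
  | e2 => obtain ⟨k, hk, ha⟩ := hg; exact ⟨k, hk, aff_congr ha he⟩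
  | ea => obtain ⟨c, hc, ha⟩ := hg; exact ⟨c, hc, aff_congr ha he⟩
  | einf =>
    rcases hg with ⟨c, k, hc, hk, ha⟩ | hb
    · exact Or.inl ⟨c, k, hc, hk, aff_congr ha he⟩
    · exact Or.inr (big_congr hb he)

lemma big_of_le {g h} (hle : Ev (fun n => g n ≤ h n)) (hg : Big g) : Big h :=
  fun C => ((hg C).comb2 hle (fun _ a b => le_trans a b))

lemma big_of_sq {g} (h : Ev (fun n => n * n ≤ g n)) : Big g := fun C =>
  (ev_ge C).comb2 h (fun n h1 h2 => le_trans (Nat.mul_le_mul_right n h1) h2)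

lemma aff_ge_n {c k g} (hc : 1 ≤ c) (hg : Aff c k g) : Ev (fun n => n ≤ g n) :=
  hg.mono (fun n e => by
    rw [e]
    calc n = 1 * n := (one_mul n).symm
      _ ≤ c * n := Nat.mul_le_mul_right n hc
      _ ≤ c * n + k := Nat.le_add_right _ _)

lemma aff_ge_one {c k g} (hk : 1 ≤ k) (hg : Aff c k g) : Ev (fun n => 1 ≤ g n) :=
  hg.mono (fun n e => by rw [e]; omega)

/-- every class except e0 eventually has value ≥ 1. -/
lemma cls_ge_one {x g} (hx : x ≠ B5.e0) (hg : Cls x g) : Ev (fun n => 1 ≤ g n) := by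
  cases x with
  | e0 => exact absurd rfl hx
  | e1 => exact aff_ge_one le_rfl hg
  | e2 => obtain ⟨k, hk, ha⟩ := hg; exact aff_ge_one (by omega) ha
  | ea =>
    obtain ⟨c, hc, ha⟩ := hg
    exact (aff_ge_n hc ha).comb2 (ev_ge 1) (fun n a b => le_trans b a)
  | einf =>
    rcases hg with ⟨c, k, hc, hk, ha⟩ | hb
    · exact aff_ge_one hk ha
    · exact (hb 1).comb2 (ev_ge 1) (fun n a b => by omega)

/-- classes e2, ea, einf eventually have value ≥ 2. -/
lemma cls_ge_two {x g} (hx : x = B5.e2 ∨ x = B5.ea ∨ x = B5.einf) (hg : Cls x g) :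
    Ev (fun n => 2 ≤ g n) := by
  cases x with
  | e0 => simp at hx
  | e1 => simp at hx
  | e2 => obtain ⟨k, hk, ha⟩ := hg; exact ha.mono (fun n e => by rw [e]; omega)
  | ea =>
    obtain ⟨c, hc, ha⟩ := hg
    exact (aff_ge_n hc ha).comb2 (ev_ge 2) (fun n a b => le_trans b a)
  | einf =>
    rcases hg with ⟨c, k, hc, hk, ha⟩ | hb
    · exact (aff_ge_n hc ha).comb2 (ev_ge 2) (fun n a b => le_trans b a)
    · exact (hb 1).comb2 (ev_ge 2) (fun n a b => by omega)

/-- classes ea, einf eventually have value ≥ n. -/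
lemma cls_ge_id {x g} (hx : x = B5.ea ∨ x = B5.einf) (hg : Cls x g) :
    Ev (fun n => n ≤ g n) := by
  cases x with
  | e0 => simp at hx
  | e1 => simp at hx
  | e2 => simp at hx
  | ea => obtain ⟨c, hc, ha⟩ := hg; exact aff_ge_n hc ha
  | einf =>
    rcases hg with ⟨c, k, hc, hk, ha⟩ | hb
    · exact aff_ge_n hc ha
    · exact (hb 1).mono (fun n a => by omega)

lemma sq_le_two_pow {n : ℕ} (hn : 4 ≤ n) : n * n ≤ 2 ^ n := by
  induction n, hn using Nat.le_induction with
  | base => norm_num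
  | succ m hm ih =>
    have h1 : 2 ^ (m + 1) = 2 ^ m + 2 ^ m := by ring
    have h2 : 4 * m ≤ m * m := Nat.mul_le_mul_right m hm
    nlinarith

lemma big_two_pow : Big (fun n => 2 ^ n) := fun C =>
  (ev_ge (max C 4)).mono (fun n hn => by
    have h1 : C * n ≤ n * n := Nat.mul_le_mul_right n (le_trans (le_max_left _ _) hn)
    exact le_trans h1 (sq_le_two_pow (le_trans (le_max_right _ _) hn)))

lemma big_fact_aux (C n : ℕ) (h : C + 1 ≤ n) : C * n ≤ n.factorial := by
  rcases Nat.exists_eq_add_of_le h with ⟨m, rfl⟩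
  have h1 : (C + 1 + m) = (C + m) + 1 := by ring
  rw [h1, Nat.factorial_succ]
  have h2 : C ≤ (C + m).factorial := le_trans (Nat.le_add_right _ _) (Nat.self_le_factorial _)
  calc C * (C + m + 1) = (C + m + 1) * C := by ring
    _ ≤ (C + m + 1) * (C + m).factorial := Nat.mul_le_mul_left _ h2

/-- `g ≥ n` eventually implies `g!` is big. -/
lemma big_fact {g : ℕ → ℕ} (hg : Ev (fun n => n ≤ g n)) : Big (fun n => (g n).factorial) := fun C =>
  hg.comb2 (ev_ge (C + 1)) (fun n h1 h2 => by
    calc C * n ≤ n.factorial := big_fact_aux C n h2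
      _ ≤ (g n).factorial := Nat.factorial_le h1)

/-- `g ≥ n` eventually implies `2 ^ g` is big. -/
lemma big_exp2 {g : ℕ → ℕ} (hg : Ev (fun n => n ≤ g n)) : Big (fun n => 2 ^ g n) :=
  big_of_le (hg.mono (fun n h1 => Nat.pow_le_pow_right (by norm_num) h1)) big_two_pow

/-- `g ≥ 2`, `h ≥ n` eventually implies `g ^ h` is big. -/
lemma big_pow_exp {g h : ℕ → ℕ} (hg : Ev (fun n => 2 ≤ g n)) (hh : Ev (fun n => n ≤ h n)) :
    Big (fun n => g n ^ h n) :=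
  big_of_le (hg.comb2 hh (fun n h1 h2 => by
    calc 2 ^ n ≤ 2 ^ h n := Nat.pow_le_pow_right (by norm_num) h2
      _ ≤ g n ^ h n := Nat.pow_le_pow_left h1 _)) big_two_pow

/-- `g ≥ n`, `h ≥ 2` eventually implies `g ^ h` is big. -/
lemma big_pow_base {g h : ℕ → ℕ} (hg : Ev (fun n => n ≤ g n)) (hh : Ev (fun n => 2 ≤ h n)) :
    Big (fun n => g n ^ h n) :=
  big_of_sq (hg.comb3 hh (ev_ge 1) (fun n h1 h2 h3 => by
    calc n * n = n ^ 2 := (sq n).symm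
      _ ≤ g n ^ 2 := Nat.pow_le_pow_left h1 2
      _ ≤ g n ^ h n := Nat.pow_le_pow_right (le_trans h3 h1) h2))

end Stmt1Aux
namespace Stmt1Aux

/-! ### affine and big arithmetic -/

lemma aff_add' {c1 k1 c2 k2 : ℕ} {g h : ℕ → ℕ} (h1 : Aff c1 k1 g) (h2 : Aff c2 k2 h) :
    Aff (c1 + c2) (k1 + k2) (fun n => g n + h n) :=
  h1.comb2 h2 (fun n e1 e2 => by
    show g n + h n = (c1 + c2) * n + (k1 + k2); rw [e1, e2]; ring)

lemma aff_mul_left' {d c2 k2 : ℕ} {g h : ℕ → ℕ} (h1 : Aff 0 d g) (h2 : Aff c2 k2 h) :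
    Aff (d * c2) (d * k2) (fun n => g n * h n) :=
  h1.comb2 h2 (fun n e1 e2 => by
    show g n * h n = d * c2 * n + d * k2; rw [e1, e2]; ring)

lemma aff_mul_right' {d c1 k1 : ℕ} {g h : ℕ → ℕ} (h1 : Aff c1 k1 g) (h2 : Aff 0 d h) :
    Aff (d * c1) (d * k1) (fun n => g n * h n) :=
  h1.comb2 h2 (fun n e1 e2 => by
    show g n * h n = d * c1 * n + d * k1; rw [e1, e2]; ring)

lemma big_add_left {g h : ℕ → ℕ} (hb : Big g) : Big (fun n => g n + h n) :=
  big_of_le ⟨0, fun n _ => Nat.le_add_right _ _⟩ hb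

lemma big_add_right {g h : ℕ → ℕ} (hb : Big h) : Big (fun n => g n + h n) :=
  big_of_le ⟨0, fun n _ => Nat.le_add_left _ _⟩ hb

lemma big_mul_left {g h : ℕ → ℕ} (hb : Big g) (h1 : Ev (fun n => 1 ≤ h n)) :
    Big (fun n => g n * h n) := fun C =>
  (hb C).comb2 h1 (fun n a b => le_trans a (by
    calc g n = g n * 1 := (mul_one _).symm
      _ ≤ g n * h n := Nat.mul_le_mul_left _ b))

lemma big_mul_right {g h : ℕ → ℕ} (hb : Big h) (h1 : Ev (fun n => 1 ≤ g n)) :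
    Big (fun n => g n * h n) := fun C =>
  (hb C).comb2 h1 (fun n a b => le_trans a (by
    calc h n = 1 * h n := (one_mul _).symm
      _ ≤ g n * h n := Nat.mul_le_mul_right _ b))

lemma inf_aff {c k : ℕ} {g : ℕ → ℕ} (ha : Aff c k g) (hc : 1 ≤ c) (hk : 1 ≤ k) :
    Cls B5.einf g := Or.inl ⟨c, k, hc, hk, ha⟩

lemma inf_big {g : ℕ → ℕ} (hb : Big g) : Cls B5.einf g := Or.inr hb

/-! ### binomial coefficient lemmas -/

lemma choose_mono_diag (a : ℕ) {b b' : ℕ} (h : b ≤ b') :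
    (a + b).choose b ≤ (a + b').choose b' := by
  have hm : Monotone (fun b => (a + b).choose b) := monotone_nat_of_le_succ (fun b => by
    show (a + b).choose b ≤ (a + (b + 1)).choose (b + 1)
    rw [show a + (b + 1) = (a + b) + 1 from rfl, Nat.choose_succ_succ]
    exact Nat.le_add_right _ _)
  exact hm h

lemma choose_flip (a b : ℕ) : (a + b).choose b = (a + b).choose a := by
  have h := Nat.choose_symm (Nat.le_add_left b a)
  rw [Nat.add_sub_cancel] at h
  exact h.symm

lemma quad_le_choose (C n : ℕ) (h : 2 * C ≤ n) : C * n ≤ (n + 2).choose 2 := by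
  rw [Nat.choose_two_right, Nat.le_div_iff_mul_le (by norm_num : (0:ℕ) < 2)]
  have h2 : n + 2 - 1 = n + 1 := by omega
  rw [h2]
  nlinarith

lemma big_cc_left {g h : ℕ → ℕ} (hgn : Ev (fun n => n ≤ g n)) (hh2 : Ev (fun n => 2 ≤ h n)) :
    Big (fun n => (g n + h n).choose (h n)) := fun C =>
  hgn.comb3 hh2 (ev_ge (2 * C)) (fun n a b c => by
    calc C * n ≤ (n + 2).choose 2 := quad_le_choose C n c
      _ ≤ (g n + 2).choose 2 := Nat.choose_le_choose 2 (by omega)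
      _ ≤ (g n + h n).choose (h n) := choose_mono_diag (g n) b)

lemma big_cc_right {g h : ℕ → ℕ} (hg2 : Ev (fun n => 2 ≤ g n)) (hhn : Ev (fun n => n ≤ h n)) :
    Big (fun n => (g n + h n).choose (h n)) :=
  big_congr (big_cc_left hhn hg2) ⟨0, fun n _ => by
    show (h n + g n).choose (g n) = (g n + h n).choose (h n)
    rw [add_comm (h n) (g n)]
    exact (choose_flip (g n) (h n)).symm⟩

lemma cc_const {c d : ℕ} {g h : ℕ → ℕ} (hc : 1 ≤ c) (hd : 1 ≤ d)
    (h1 : Aff 0 c g) (h2 : Aff 0 d h) :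
    Cls B5.e2 (fun n => (g n + h n).choose (h n)) := by
  refine ⟨(c + d).choose d, ?_, ?_⟩
  · calc 2 ≤ c + 1 := by omega
      _ = (c + 1).choose 1 := (Nat.choose_one_right _).symm
      _ ≤ (c + d).choose d := choose_mono_diag c hd
  · exact h1.comb2 h2 (fun n e1 e2 => by
      show (g n + h n).choose (h n) = 0 * n + (c + d).choose d
      rw [e1, e2]; simp)

end Stmt1Aux
namespace Stmt1Aux

/-! ### closure of the classes under the operations of B -/

lemma cls_add {x y : B5} {g h : ℕ → ℕ} (hg : Cls x g) (hh : Cls y h) :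
    Cls (B5.add x y) (fun n => g n + h n) := by
  cases x with
  | e0 =>
    -- g is eventually 0
    cases y <;>
      exact cls_congr hh (hg.mono (fun n e => by omega))
  | e1 =>
    cases y with
    | e0 => exact cls_congr hg (hh.mono (fun n e => by omega))
    | e1 => exact ⟨2, le_rfl, aff_add' hg hh⟩
    | e2 => obtain ⟨k, hk, ha⟩ := hh; exact ⟨1 + k, by omega, aff_add' hg ha⟩
    | ea =>
      obtain ⟨c, hc, ha⟩ := hh
      exact inf_aff (aff_add' hg ha) (by omega) (by omega)
    | einf =>
      rcases hh with ⟨c, k, hc, hk, ha⟩ | hb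
      · exact inf_aff (aff_add' hg ha) (by omega) (by omega)
      · exact inf_big (big_add_right hb)
  | e2 =>
    obtain ⟨k, hk, ha⟩ := hg
    cases y with
    | e0 => exact cls_congr ⟨k, hk, ha⟩ (hh.mono (fun n e => by omega))
    | e1 => exact ⟨k + 1, by omega, aff_add' ha hh⟩
    | e2 => obtain ⟨k', hk', ha'⟩ := hh; exact ⟨k + k', by omega, aff_add' ha ha'⟩
    | ea =>
      obtain ⟨c, hc, ha'⟩ := hh
      exact inf_aff (aff_add' ha ha') (by omega) (by omega)
    | einf =>
      rcases hh with ⟨c, k', hc, hk', ha'⟩ | hb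
      · exact inf_aff (aff_add' ha ha') (by omega) (by omega)
      · exact inf_big (big_add_right hb)
  | ea =>
    obtain ⟨c, hc, ha⟩ := hg
    cases y with
    | e0 => exact cls_congr ⟨c, hc, ha⟩ (hh.mono (fun n e => by omega))
    | e1 => exact inf_aff (aff_add' ha hh) (by omega) (by omega)
    | e2 =>
      obtain ⟨k, hk, ha'⟩ := hh
      exact inf_aff (aff_add' ha ha') (by omega) (by omega)
    | ea =>
      obtain ⟨c', hc', ha'⟩ := hh
      exact ⟨c + c', by omega, aff_add' ha ha'⟩
    | einf =>
      rcases hh with ⟨c', k', hc', hk', ha'⟩ | hb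
      · exact inf_aff (aff_add' ha ha') (by omega) (by omega)
      · exact inf_big (big_add_right hb)
  | einf =>
    cases y with
    | e0 => exact cls_congr hg (hh.mono (fun n e => by omega))
    | e1 =>
      rcases hg with ⟨c, k, hc, hk, ha⟩ | hb
      · exact inf_aff (aff_add' ha hh) (by omega) (by omega)
      · exact inf_big (big_add_left hb)
    | e2 =>
      obtain ⟨k', hk', ha'⟩ := hh
      rcases hg with ⟨c, k, hc, hk, ha⟩ | hb
      · exact inf_aff (aff_add' ha ha') (by omega) (by omega)
      · exact inf_big (big_add_left hb)
    | ea =>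
      obtain ⟨c', hc', ha'⟩ := hh
      rcases hg with ⟨c, k, hc, hk, ha⟩ | hb
      · exact inf_aff (aff_add' ha ha') (by omega) (by omega)
      · exact inf_big (big_add_left hb)
    | einf =>
      rcases hg with ⟨c, k, hc, hk, ha⟩ | hb
      · rcases hh with ⟨c', k', hc', hk', ha'⟩ | hb'
        · exact inf_aff (aff_add' ha ha') (by omega) (by omega)
        · exact inf_big (big_add_right hb')
      · exact inf_big (big_add_left hb)

lemma cls_mul {x y : B5} {g h : ℕ → ℕ} (hg : Cls x g) (hh : Cls y h) :
    Cls (B5.mul x y) (fun n => g n * h n) := by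
  cases x with
  | e0 =>
    cases y <;>
      exact hg.mono (fun n e => by
        have h0 : g n = 0 := by omega
        simp [h0])
  | e1 =>
    cases y <;>
      exact cls_congr hh (hg.mono (fun n e => by
        have h1 : g n = 1 := by omega
        simp [h1]))
  | e2 =>
    obtain ⟨k, hk, ha⟩ := hg
    cases y with
    | e0 =>
      exact hh.mono (fun n e => by
        have h0 : h n = 0 := by omega
        simp [h0])
    | e1 =>
      exact cls_congr ⟨k, hk, ha⟩ (hh.mono (fun n e => by
        have h1 : h n = 1 := by omega
        simp [h1]))
    | e2 =>
      obtain ⟨k', hk', ha'⟩ := hh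
      exact ⟨k * k', by nlinarith, aff_mul_left' ha ha'⟩
    | ea =>
      obtain ⟨c, hc, ha'⟩ := hh
      exact ⟨k * c, by nlinarith, aff_mul_left' ha ha'⟩
    | einf =>
      rcases hh with ⟨c, k', hc, hk', ha'⟩ | hb
      · exact inf_aff (aff_mul_left' ha ha') (Nat.mul_pos (by omega) (by omega)) (Nat.mul_pos (by omega) (by omega))
      · exact inf_big (big_mul_right hb (aff_ge_one (by omega) ha))
  | ea =>
    obtain ⟨c, hc, ha⟩ := hg
    cases y with
    | e0 =>
      exact hh.mono (fun n e => by
        have h0 : h n = 0 := by omega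
        simp [h0])
    | e1 =>
      exact cls_congr ⟨c, hc, ha⟩ (hh.mono (fun n e => by
        have h1 : h n = 1 := by omega
        simp [h1]))
    | e2 =>
      obtain ⟨k, hk, ha'⟩ := hh
      exact ⟨k * c, by nlinarith, aff_mul_right' ha ha'⟩
    | ea =>
      exact inf_big (big_of_sq ((aff_ge_n hc ha).comb2
        (cls_ge_id (Or.inl rfl) hh) (fun n a b => Nat.mul_le_mul a b)))
    | einf =>
      exact inf_big (big_of_sq ((aff_ge_n hc ha).comb2
        (cls_ge_id (Or.inr rfl) hh) (fun n a b => Nat.mul_le_mul a b)))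
  | einf =>
    cases y with
    | e0 =>
      exact hh.mono (fun n e => by
        have h0 : h n = 0 := by omega
        simp [h0])
    | e1 =>
      exact cls_congr hg (hh.mono (fun n e => by
        have h1 : h n = 1 := by omega
        simp [h1]))
    | e2 =>
      obtain ⟨k, hk, ha'⟩ := hh
      rcases hg with ⟨c, k', hc, hk', ha⟩ | hb
      · exact inf_aff (aff_mul_right' ha ha') (Nat.mul_pos (by omega) (by omega)) (Nat.mul_pos (by omega) (by omega))
      · exact inf_big (big_mul_left hb (aff_ge_one (by omega) ha'))
    | ea =>
      exact inf_big (big_of_sq ((cls_ge_id (Or.inr rfl) hg).comb2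
        (cls_ge_id (Or.inl rfl) hh) (fun n a b => Nat.mul_le_mul a b)))
    | einf =>
      exact inf_big (big_of_sq ((cls_ge_id (Or.inr rfl) hg).comb2
        (cls_ge_id (Or.inr rfl) hh) (fun n a b => Nat.mul_le_mul a b)))

end Stmt1Aux
namespace Stmt1Aux

lemma pow_exp_zero {g h : ℕ → ℕ} (hh : Aff 0 0 h) :
    Aff 0 1 (fun n => g n ^ h n) :=
  hh.mono (fun n e => by
    show g n ^ h n = 0 * n + 1
    have h0 : h n = 0 := by omega
    simp [h0])

lemma pow_base_one {g h : ℕ → ℕ} (hg : Aff 0 1 g) :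
    Aff 0 1 (fun n => g n ^ h n) :=
  hg.mono (fun n e => by
    show g n ^ h n = 0 * n + 1
    have h1 : g n = 1 := by omega
    simp [h1])

lemma pow_base_zero {x : B5} {g h : ℕ → ℕ} (hg : Aff 0 0 g) (hx : x ≠ B5.e0)
    (hh : Cls x h) : Aff 0 0 (fun n => g n ^ h n) :=
  hg.comb2 (cls_ge_one hx hh) (fun n e1 e2 => by
    show g n ^ h n = 0 * n + 0
    have h0 : g n = 0 := by omega
    rw [h0]
    simp [Nat.zero_pow (by omega : 0 < h n)])

lemma pow_exp_one {x : B5} {g h : ℕ → ℕ} (hg : Cls x g) (hh : Aff 0 1 h) :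
    Cls x (fun n => g n ^ h n) :=
  cls_congr hg (hh.mono (fun n e => by
    show g n = g n ^ h n
    have h1 : h n = 1 := by omega
    simp [h1]))

lemma cls_pow {x y : B5} {g h : ℕ → ℕ} (hg : Cls x g) (hh : Cls y h) :
    Cls (B5.pow x y) (fun n => g n ^ h n) := by
  cases x with
  | e0 =>
    cases y with
    | e0 => exact pow_exp_zero hh
    | e1 => exact pow_base_zero hg (by simp) hh
    | e2 => exact pow_base_zero hg (by simp) hh
    | ea => exact pow_base_zero hg (by simp) hh
    | einf => exact pow_base_zero hg (by simp) hh
  | e1 =>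
    cases y <;> exact pow_base_one hg
  | e2 =>
    cases y with
    | e0 => exact pow_exp_zero hh
    | e1 => exact pow_exp_one hg hh
    | e2 =>
      obtain ⟨k, hk, ha⟩ := hg
      obtain ⟨k', hk', ha'⟩ := hh
      refine ⟨k ^ k', le_trans hk (Nat.le_self_pow (by omega) k), ?_⟩
      exact ha.comb2 ha' (fun n e1 e2 => by
        show g n ^ h n = 0 * n + k ^ k'
        rw [e1, e2]; simp)
    | ea =>
      exact inf_big (big_pow_exp (cls_ge_two (Or.inl rfl) hg) (cls_ge_id (Or.inl rfl) hh))
    | einf =>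
      exact inf_big (big_pow_exp (cls_ge_two (Or.inl rfl) hg) (cls_ge_id (Or.inr rfl) hh))
  | ea =>
    cases y with
    | e0 => exact pow_exp_zero hh
    | e1 => exact pow_exp_one hg hh
    | e2 =>
      exact inf_big (big_pow_base (cls_ge_id (Or.inl rfl) hg)
        (cls_ge_two (Or.inl rfl) hh))
    | ea =>
      exact inf_big (big_pow_base (cls_ge_id (Or.inl rfl) hg)
        (cls_ge_two (Or.inr (Or.inl rfl)) hh))
    | einf =>
      exact inf_big (big_pow_base (cls_ge_id (Or.inl rfl) hg)
        (cls_ge_two (Or.inr (Or.inr rfl)) hh))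
  | einf =>
    cases y with
    | e0 => exact pow_exp_zero hh
    | e1 => exact pow_exp_one hg hh
    | e2 =>
      exact inf_big (big_pow_base (cls_ge_id (Or.inr rfl) hg)
        (cls_ge_two (Or.inl rfl) hh))
    | ea =>
      exact inf_big (big_pow_base (cls_ge_id (Or.inr rfl) hg)
        (cls_ge_two (Or.inr (Or.inl rfl)) hh))
    | einf =>
      exact inf_big (big_pow_base (cls_ge_id (Or.inr rfl) hg)
        (cls_ge_two (Or.inr (Or.inr rfl)) hh))

lemma cc_exp_zero {g h : ℕ → ℕ} (hh : Aff 0 0 h) :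
    Aff 0 1 (fun n => (g n + h n).choose (h n)) :=
  hh.mono (fun n e => by
    show (g n + h n).choose (h n) = 0 * n + 1
    have h0 : h n = 0 := by omega
    simp [h0])

lemma cc_base_zero {g h : ℕ → ℕ} (hg : Aff 0 0 g) :
    Aff 0 1 (fun n => (g n + h n).choose (h n)) :=
  hg.mono (fun n e => by
    show (g n + h n).choose (h n) = 0 * n + 1
    have h0 : g n = 0 := by omega
    simp [h0])

/-- x © 1 where x is big-ish: value is eventually g + 1. -/
lemma cc_exp_one_eq {g h : ℕ → ℕ} (hh : Aff 0 1 h) :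
    Ev (fun n => g n + 1 = (g n + h n).choose (h n)) :=
  hh.mono (fun n e => by
    have h1 : h n = 1 := by omega
    rw [h1, Nat.choose_one_right])

/-- 1 © y: value is eventually h + 1. -/
lemma cc_base_one_eq {g h : ℕ → ℕ} (hg : Aff 0 1 g) :
    Ev (fun n => h n + 1 = (g n + h n).choose (h n)) :=
  hg.mono (fun n e => by
    have h1 : g n = 1 := by omega
    rw [h1, choose_flip 1 (h n), Nat.choose_one_right]
    omega)

/-- the class einf applied to a "successor" of an ea/einf sequence. -/
lemma inf_succ {x : B5} {g : ℕ → ℕ} (hx : x = B5.ea ∨ x = B5.einf) (hg : Cls x g) :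
    Cls B5.einf (fun n => g n + 1) := by
  cases x with
  | e0 => simp at hx
  | e1 => simp at hx
  | e2 => simp at hx
  | ea =>
    obtain ⟨c, hc, ha⟩ := hg
    exact inf_aff (aff_add' ha (⟨0, fun n _ => by norm_num⟩ : Aff 0 1 (fun _ => 1)))
      (by omega) (by omega)
  | einf =>
    rcases hg with ⟨c, k, hc, hk, ha⟩ | hb
    · exact inf_aff (aff_add' ha (⟨0, fun n _ => by norm_num⟩ : Aff 0 1 (fun _ => 1)))
        (by omega) (by omega)
    · exact inf_big (big_of_le ⟨0, fun n _ => Nat.le_add_right _ _⟩ hb)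

lemma cls_cc {x y : B5} {g h : ℕ → ℕ} (hg : Cls x g) (hh : Cls y h) :
    Cls (B5.cc x y) (fun n => (g n + h n).choose (h n)) := by
  cases x with
  | e0 =>
    cases y <;> exact cc_base_zero hg
  | e1 =>
    cases y with
    | e0 => exact cc_exp_zero hh
    | e1 => exact cc_const le_rfl le_rfl hg hh
    | e2 => obtain ⟨k, hk, ha⟩ := hh; exact cc_const le_rfl (by omega) hg ha
    | ea => exact cls_congr (inf_succ (Or.inl rfl) hh) (cc_base_one_eq hg)
    | einf => exact cls_congr (inf_succ (Or.inr rfl) hh) (cc_base_one_eq hg)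
  | e2 =>
    obtain ⟨k, hk, ha⟩ := hg
    cases y with
    | e0 => exact cc_exp_zero hh
    | e1 => exact cc_const (by omega) le_rfl ha hh
    | e2 => obtain ⟨k', hk', ha'⟩ := hh; exact cc_const (by omega) (by omega) ha ha'
    | ea =>
      exact inf_big (big_cc_right (cls_ge_two (Or.inl rfl) ⟨k, hk, ha⟩)
        (cls_ge_id (Or.inl rfl) hh))
    | einf =>
      exact inf_big (big_cc_right (cls_ge_two (Or.inl rfl) ⟨k, hk, ha⟩)
        (cls_ge_id (Or.inr rfl) hh))
  | ea =>
    cases y with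
    | e0 => exact cc_exp_zero hh
    | e1 => exact cls_congr (inf_succ (Or.inl rfl) hg) (cc_exp_one_eq hh)
    | e2 =>
      obtain ⟨k, hk, ha'⟩ := hh
      exact inf_big (big_cc_left (cls_ge_id (Or.inl rfl) hg)
        (cls_ge_two (Or.inl rfl) ⟨k, hk, ha'⟩))
    | ea =>
      exact inf_big (big_cc_left (cls_ge_id (Or.inl rfl) hg)
        (cls_ge_two (Or.inr (Or.inl rfl)) hh))
    | einf =>
      exact inf_big (big_cc_left (cls_ge_id (Or.inl rfl) hg)
        (cls_ge_two (Or.inr (Or.inr rfl)) hh))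
  | einf =>
    cases y with
    | e0 => exact cc_exp_zero hh
    | e1 => exact cls_congr (inf_succ (Or.inr rfl) hg) (cc_exp_one_eq hh)
    | e2 =>
      obtain ⟨k, hk, ha'⟩ := hh
      exact inf_big (big_cc_left (cls_ge_id (Or.inr rfl) hg)
        (cls_ge_two (Or.inl rfl) ⟨k, hk, ha'⟩))
    | ea =>
      exact inf_big (big_cc_left (cls_ge_id (Or.inr rfl) hg)
        (cls_ge_two (Or.inr (Or.inl rfl)) hh))
    | einf =>
      exact inf_big (big_cc_left (cls_ge_id (Or.inr rfl) hg)
        (cls_ge_two (Or.inr (Or.inr rfl)) hh))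

lemma cls_fact {x : B5} {g : ℕ → ℕ} (hg : Cls x g) :
    Cls (B5.fact x) (fun n => (g n).factorial) := by
  cases x with
  | e0 =>
    exact hg.mono (fun n e => by
      show (g n).factorial = 0 * n + 1
      have h0 : g n = 0 := by omega
      simp [h0])
  | e1 =>
    exact hg.mono (fun n e => by
      show (g n).factorial = 0 * n + 1
      have h1 : g n = 1 := by omega
      simp [h1])
  | e2 =>
    obtain ⟨k, hk, ha⟩ := hg
    refine ⟨k.factorial, le_trans hk (Nat.self_le_factorial k), ?_⟩
    exact ha.mono (fun n e => by
      show (g n).factorial = 0 * n + k.factorial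
      have h1 : g n = k := by omega
      simp [h1])
  | ea => exact inf_big (big_fact (cls_ge_id (Or.inl rfl) hg))
  | einf => exact inf_big (big_fact (cls_ge_id (Or.inr rfl) hg))

lemma cls_exp2 {x : B5} {g : ℕ → ℕ} (hg : Cls x g) :
    Cls (B5.exp2 x) (fun n => 2 ^ g n) := by
  cases x with
  | e0 =>
    exact hg.mono (fun n e => by
      show 2 ^ g n = 0 * n + 1
      have h0 : g n = 0 := by omega
      simp [h0])
  | e1 =>
    refine ⟨2, le_rfl, hg.mono (fun n e => by
      show 2 ^ g n = 0 * n + 2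
      have h1 : g n = 1 := by omega
      simp [h1])⟩
  | e2 =>
    obtain ⟨k, hk, ha⟩ := hg
    refine ⟨2 ^ k, ?_, ?_⟩
    · calc 2 = 2 ^ 1 := by norm_num
        _ ≤ 2 ^ k := Nat.pow_le_pow_right (by norm_num) (by omega)
    · exact ha.mono (fun n e => by
        show 2 ^ g n = 0 * n + 2 ^ k
        have h1 : g n = k := by omega
        simp [h1])
  | ea => exact inf_big (big_exp2 (cls_ge_id (Or.inl rfl) hg))
  | einf => exact inf_big (big_exp2 (cls_ge_id (Or.inr rfl) hg))

end Stmt1Aux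
namespace Stmt1Aux

/-! ### uniqueness of the class of a sequence -/

lemma aff_unique {c k c' k' : ℕ} {g : ℕ → ℕ} (h1 : Aff c k g) (h2 : Aff c' k' g) :
    c = c' ∧ k = k' := by
  obtain ⟨N1, e1⟩ := h1; obtain ⟨N2, e2⟩ := h2
  have a1 : g (N1 + N2) = c * (N1 + N2) + k := e1 (N1 + N2) (by omega)
  have b1 : g (N1 + N2) = c' * (N1 + N2) + k' := e2 (N1 + N2) (by omega)
  have a2 : g (N1 + N2 + 1) = c * (N1 + N2) + c + k := by
    have := e1 (N1 + N2 + 1) (by omega)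
    simpa [Nat.mul_succ] using this
  have b2 : g (N1 + N2 + 1) = c' * (N1 + N2) + c' + k' := by
    have := e2 (N1 + N2 + 1) (by omega)
    simpa [Nat.mul_succ] using this
  set u := c * (N1 + N2) with hu
  set v := c' * (N1 + N2) with hv
  have hc : c = c' := by omega
  have huv : u = v := by rw [hu, hv, hc]
  exact ⟨hc, by omega⟩

lemma aff_not_big {c k : ℕ} {g : ℕ → ℕ} (ha : Aff c k g) (hb : Big g) : False := by
  obtain ⟨N1, e1⟩ := ha
  obtain ⟨N2, e2⟩ := hb (c + k + 1)
  have h1 : g (N1 + N2 + 1) = c * (N1 + N2 + 1) + k := e1 (N1 + N2 + 1) (by omega)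
  have h2 : (c + k + 1) * (N1 + N2 + 1) ≤ g (N1 + N2 + 1) := e2 (N1 + N2 + 1) (by omega)
  rw [h1] at h2
  nlinarith

/-- parameter region of each class. -/
def Reg : B5 → ℕ → ℕ → Prop
  | .e0 => fun c k => c = 0 ∧ k = 0
  | .e1 => fun c k => c = 0 ∧ k = 1
  | .e2 => fun c k => c = 0 ∧ 2 ≤ k
  | .ea => fun c k => 1 ≤ c ∧ k = 0
  | .einf => fun c k => 1 ≤ c ∧ 1 ≤ k

lemma cls_cases {x : B5} {g : ℕ → ℕ} (hx : Cls x g) :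
    (∃ c k, Reg x c k ∧ Aff c k g) ∨ (x = B5.einf ∧ Big g) := by
  cases x with
  | e0 => exact Or.inl ⟨0, 0, ⟨rfl, rfl⟩, hx⟩
  | e1 => exact Or.inl ⟨0, 1, ⟨rfl, rfl⟩, hx⟩
  | e2 => obtain ⟨k, hk, ha⟩ := hx; exact Or.inl ⟨0, k, ⟨rfl, hk⟩, ha⟩
  | ea => obtain ⟨c, hc, ha⟩ := hx; exact Or.inl ⟨c, 0, ⟨hc, rfl⟩, ha⟩
  | einf =>
    rcases hx with ⟨c, k, hc, hk, ha⟩ | hb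
    · exact Or.inl ⟨c, k, ⟨hc, hk⟩, ha⟩
    · exact Or.inr ⟨rfl, hb⟩

lemma reg_disj {x y : B5} {c k : ℕ} (hx : Reg x c k) (hy : Reg y c k) : x = y := by
  cases x <;> cases y <;> first
    | rfl
    | (exfalso; simp only [Reg] at hx hy; omega)

lemma cls_unique {x y : B5} {g : ℕ → ℕ} (hx : Cls x g) (hy : Cls y g) : x = y := by
  rcases cls_cases hx with ⟨c, k, hr, ha⟩ | ⟨hxe, hb⟩
  · rcases cls_cases hy with ⟨c', k', hr', ha'⟩ | ⟨hye, hb'⟩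
    · obtain ⟨hc, hk⟩ := aff_unique ha ha'
      subst hc; subst hk
      exact reg_disj hr hr'
    · exact absurd (aff_not_big ha hb') id
  · rcases cls_cases hy with ⟨c', k', hr', ha'⟩ | ⟨hye, hb'⟩
    · exact absurd (aff_not_big ha' hb) id
    · rw [hxe, hye]

/-! ### the representative sequences and main argument -/

/-- representative sequence of each element of B. -/
def rep : B5 → ℕ → ℕ
  | .e0 => fun _ => 0
  | .e1 => fun _ => 1
  | .e2 => fun _ => 2
  | .ea => fun n => n
  | .einf => fun n => n + 1

lemma cls_rep (b : B5) : Cls b (rep b) := by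
  cases b with
  | e0 => exact ⟨0, fun n _ => by simp [rep]⟩
  | e1 => exact ⟨0, fun n _ => by simp [rep]⟩
  | e2 => exact ⟨2, le_rfl, ⟨0, fun n _ => by simp [rep]⟩⟩
  | ea => exact ⟨1, le_rfl, ⟨0, fun n _ => by simp [rep]⟩⟩
  | einf => exact Or.inl ⟨1, 1, le_rfl, le_rfl, ⟨0, fun n _ => by simp [rep]⟩⟩

/-- main induction: the B-evaluation of a term names the class of its ℕ-evaluations
along the representative sequences. -/
lemma cls_eval {m : ℕ} (u : ETerm m) (φ : Fin m → B5) :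
    Cls (u.evalB φ) (fun n => u.evalN (fun i => rep (φ i) n)) := by
  induction u with
  | var i => exact cls_rep (φ i)
  | zero => exact ⟨0, fun n _ => by simp [ETerm.evalN]⟩
  | one => exact ⟨0, fun n _ => by simp [ETerm.evalN]⟩
  | add s t ihs iht => exact cls_add ihs iht
  | mul s t ihs iht => exact cls_mul ihs iht
  | pow s t ihs iht => exact cls_pow ihs iht
  | cc s t ihs iht => exact cls_cc ihs iht
  | fact s ihs => exact cls_fact ihs
  | exp2 s ihs => exact cls_exp2 ihs

end Stmt1Aux

private theorem stmt1AuxMain {m : ℕ} (s t : ETerm m)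
    (h : ∀ φ : Fin m → ℕ, s.evalN φ = t.evalN φ) :
    ∀ φ : Fin m → B5, s.evalB φ = t.evalB φ := by
  intro φ
  have h1 := Stmt1Aux.cls_eval s φ
  have h2 := Stmt1Aux.cls_eval t φ
  have he : (fun n => s.evalN (fun i => Stmt1Aux.rep (φ i) n)) =
      (fun n => t.evalN (fun i => Stmt1Aux.rep (φ i) n)) :=
    funext (fun n => h _)
  rw [he] at h1
  exact Stmt1Aux.cls_unique h1 h2
/-- Every equation valid in ℕ₀ = ⟨ℕ₀; +, ·, ↑, ©, !, exp2, 0, 1⟩ holds in the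
five-element algebra B. -/
theorem stmt1 {m : ℕ} (s t : ETerm m)
    (h : ∀ φ : Fin m → ℕ, s.evalN φ = t.evalN φ) :
    ∀ φ : Fin m → B5, s.evalB φ = t.evalB φ := by
  exact stmt1AuxMain s t h
end

section
/- The four-element algebra B⁻ on {1,2,a,∞} satisfies every equation valid in ⟨ℕ; +, ·, ↑, 1⟩, the positive natural numbers with addition, multiplication, exponentiation and constant 1: for all terms s, t in the signature {+,·,↑,1} in m variables, if s and t evaluate equally under every assignment of the variables into the positive natural numbers, then s and t evaluate equally under every assignment into B⁻. -/
/-!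
Substitute for the elements 1, 2, a, ∞ of B⁻ the functions 1, 2, n + 1, n + 2 of a parameter
n ∈ ℕ. Every term then evaluates to a function that is either affine, `c * (n + 1) + d`, or
eventually at least `(n + 1) ^ 2`, and the value of the term in B⁻ can be read off that
function: 1 for the constant 1, 2 for the other constants, a for the multiples of `n + 1`, ∞
for everything else. Since this reading is well defined, an identity of the positive integers,
which makes the two functions equal, forces equal values in B⁻. In other words, B⁻ is a
homomorphic image of a subalgebra of the power of ⟨ℕ⁺; +, ·, ↑, 1⟩ indexed by ℕ.
-/

/-- Terms in the signature {+, ·, ↑, 1} in `m` variables. -/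
inductive PTerm (m : ℕ) : Type
  | var : Fin m → PTerm m
  | one : PTerm m
  | add : PTerm m → PTerm m → PTerm m
  | mul : PTerm m → PTerm m → PTerm m
  | pow : PTerm m → PTerm m → PTerm m

/-- Evaluation over the natural numbers. -/
def PTerm.evalN {m : ℕ} (φ : Fin m → ℕ) : PTerm m → ℕ
  | .var i => φ i
  | .one => 1
  | .add s t => s.evalN φ + t.evalN φ
  | .mul s t => s.evalN φ * t.evalN φ
  | .pow s t => (s.evalN φ) ^ (t.evalN φ)

/-- The four-element universe {1, 2, a, ∞} of the algebra B⁻. -/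
inductive B4 : Type
  | e1 | e2 | ea | einf
  deriving DecidableEq

namespace B4

def add : B4 → B4 → B4
  | e1, e1 => e2
  | e1, e2 => e2
  | e2, e1 => e2
  | e2, e2 => e2
  | ea, ea => ea
  | _, _ => einf

def mul : B4 → B4 → B4
  | e1, x => x
  | x, e1 => x
  | e2, e2 => e2
  | e2, ea => ea
  | ea, e2 => ea
  | _, _ => einf

def pow : B4 → B4 → B4
  | e1, _ => e1
  | x, e1 => x
  | e2, e2 => e2
  | _, _ => einf

end B4

/-- Evaluation of {+, ·, ↑, 1}-terms in the four-element algebra B⁻. -/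
def PTerm.evalB {m : ℕ} (φ : Fin m → B4) : PTerm m → B4
  | .var i => φ i
  | .one => B4.e1
  | .add s t => B4.add (s.evalB φ) (t.evalB φ)
  | .mul s t => B4.mul (s.evalB φ) (t.evalB φ)
  | .pow s t => B4.pow (s.evalB φ) (t.evalB φ)

open Filter

theorem Nat.sq_le_two_pow {n : ℕ} (hn : 4 ≤ n) : n ^ 2 ≤ 2 ^ n := by
  induction n, hn using Nat.le_induction with
  | base => norm_num
  | succ n hn ih => rw [pow_succ 2]; nlinarith

theorem not_eventually_sq_le_affine (c d : ℕ) :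
    ¬∀ᶠ n in atTop, (n + 1) ^ 2 ≤ c * (n + 1) + d := fun h => by
  obtain ⟨n, hn, hcd⟩ := (h.and (eventually_ge_atTop (c + d))).exists
  nlinarith

namespace B4

theorem einf_add (b : B4) : add einf b = einf := by cases b <;> rfl
theorem add_einf (b : B4) : add b einf = einf := by cases b <;> rfl
theorem einf_mul (b : B4) : mul einf b = einf := by cases b <;> rfl
theorem mul_einf (b : B4) : mul b einf = einf := by cases b <;> rfl
theorem pow_e1 (b : B4) : pow b e1 = b := by cases b <;> rfl

theorem pow_eq_einf {b b' : B4} (hb : b ≠ e1) (hb' : b' ≠ e1) (h : ¬(b = e2 ∧ b' = e2)) :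
    pow b b' = einf := by
  cases b <;> cases b' <;> simp_all [pow]

-- The reading of `n ↦ c * (n + 1) + d`; its junk value at `c = d = 0` never occurs below.
def ofAffine (c d : ℕ) : B4 :=
  if c = 0 then if d = 1 then e1 else e2 else if d = 0 then ea else einf

theorem ofAffine_add {c d c' d' : ℕ} (h : 0 < c + d) (h' : 0 < c' + d') :
    ofAffine (c + c') (d + d') = add (ofAffine c d) (ofAffine c' d') := by
  unfold ofAffine; split_ifs <;> first | rfl | omega

theorem ofAffine_mul {c d c' d' : ℕ} (h : 0 < c + d) (h' : 0 < c' + d') (hcc : c = 0 ∨ c' = 0) :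
    ofAffine (c * d' + c' * d) (d * d') = mul (ofAffine c d) (ofAffine c' d') := by
  rcases hcc with rfl | rfl <;> unfold ofAffine <;> split_ifs <;> simp_all <;> rfl

theorem ofAffine_mul_of_ne_zero {c d c' d' : ℕ} (hc : c ≠ 0) (hc' : c' ≠ 0) :
    mul (ofAffine c d) (ofAffine c' d') = einf := by
  simp only [ofAffine, if_neg hc, if_neg hc']; split_ifs <;> rfl

theorem ofAffine_eq_e1 {c d : ℕ} : ofAffine c d = e1 ↔ c = 0 ∧ d = 1 := by
  unfold ofAffine; split_ifs <;> simp_all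

theorem ofAffine_eq_e2 {c d : ℕ} : ofAffine c d = e2 ↔ c = 0 ∧ d ≠ 1 := by
  unfold ofAffine; split_ifs <;> simp_all

inductive Represents : B4 → (ℕ → ℕ) → Prop
  | affine {c d : ℕ} {f : ℕ → ℕ} (hcd : 0 < c + d) (hf : ∀ n, f n = c * (n + 1) + d) :
      Represents (ofAffine c d) f
  | big {f : ℕ → ℕ} (hf : ∀ᶠ n in atTop, (n + 1) ^ 2 ≤ f n) : Represents einf f

namespace Represents

variable {b b' : B4} {f g : ℕ → ℕ}

theorem of_forall_eq_one (hf : ∀ n, f n = 1) : Represents e1 f :=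
  .affine (c := 0) (d := 1) one_pos (by simpa using hf)

theorem of_forall_eq_const {d : ℕ} (hd : 2 ≤ d) (hf : ∀ n, f n = d) : Represents e2 f := by
  have h := Represents.affine (c := 0) (d := d) (by omega) (by simpa using hf)
  rwa [ofAffine, if_pos rfl, if_neg (by omega)] at h

theorem eventually_pos (h : Represents b f) : ∀ᶠ n in atTop, 0 < f n := by
  cases h with
  | affine hcd hf => exact .of_forall fun n => by rw [hf]; nlinarith
  | big hf => exact hf.mono fun n hn => lt_of_lt_of_le (by positivity) hn

theorem eq_one (h : Represents e1 f) (n : ℕ) : f n = 1 := by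
  generalize hb : e1 = b at h
  cases h with
  | affine hcd hf => obtain ⟨rfl, rfl⟩ := ofAffine_eq_e1.mp hb.symm; simpa using hf n
  | big hf => cases hb

theorem exists_eq_const (h : Represents e2 f) : ∃ d, 2 ≤ d ∧ ∀ n, f n = d := by
  generalize hb : e2 = b at h
  cases h with
  | @affine c d _ hcd hf =>
    obtain ⟨rfl, hd⟩ := ofAffine_eq_e2.mp hb.symm
    exact ⟨d, by omega, by simpa using hf⟩
  | big hf => cases hb

theorem eventually_two_le (h : Represents b f) (hb : b ≠ e1) : ∀ᶠ n in atTop, 2 ≤ f n := by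
  cases h with
  | @affine c d _ hcd hf =>
    have hcd1 : ¬(c = 0 ∧ d = 1) := by rwa [← ofAffine_eq_e1]
    filter_upwards [eventually_ge_atTop 1] with n hn
    rw [hf]
    rcases Nat.eq_zero_or_pos c with rfl | hc
    · omega
    · nlinarith
  | big hf =>
    filter_upwards [hf, eventually_ge_atTop 1] with n hn h1
    nlinarith

theorem eventually_succ_le (h : Represents b f) (hb1 : b ≠ e1) (hb2 : b ≠ e2) :
    ∀ᶠ n in atTop, n + 1 ≤ f n := by
  cases h with
  | @affine c d _ hcd hf =>
    have hc : c ≠ 0 := fun hc => by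
      by_cases hd : d = 1
      · exact hb1 (ofAffine_eq_e1.mpr ⟨hc, hd⟩)
      · exact hb2 (ofAffine_eq_e2.mpr ⟨hc, hd⟩)
    exact .of_forall fun n => by rw [hf]; nlinarith [Nat.one_le_iff_ne_zero.mpr hc]
  | big hf => exact hf.mono fun n hn => le_trans (by nlinarith) hn

theorem add (hf : Represents b f) (hg : Represents b' g) :
    Represents (B4.add b b') (fun n => f n + g n) := by
  cases hf with
  | big hf => rw [einf_add]; exact .big (hf.mono fun n hn => le_add_right hn)
  | affine hcd hf =>
    cases hg with
    | big hg => rw [add_einf]; exact .big (hg.mono fun n hn => le_add_left hn)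
    | affine hcd' hg =>
      rw [← ofAffine_add hcd hcd']
      exact .affine (by omega) fun n => by rw [hf, hg]; ring

theorem mul (hf : Represents b f) (hg : Represents b' g) :
    Represents (B4.mul b b') (fun n => f n * g n) := by
  cases hf with
  | big hf =>
    rw [einf_mul]
    exact .big ((hf.and hg.eventually_pos).mono fun n hn => le_mul_of_le_of_one_le hn.1 hn.2)
  | @affine c d _ hcd hf =>
    cases hg with
    | big hg =>
      rw [mul_einf]
      exact .big (((affine hcd hf).eventually_pos.and hg).mono fun n hn =>
        le_mul_of_one_le_of_le hn.1 hn.2)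
    | @affine c' d' _ hcd' hg =>
      by_cases hcc : c = 0 ∨ c' = 0
      · rw [← ofAffine_mul hcd hcd' hcc]
        refine .affine ?_ fun n => ?_
        · rcases hcc with rfl | rfl <;> simp_all
        · rw [hf, hg]; rcases hcc with rfl | rfl <;> ring
      · rw [not_or] at hcc
        rw [ofAffine_mul_of_ne_zero hcc.1 hcc.2]
        refine .big (.of_forall fun n => ?_)
        rw [hf, hg, sq]
        exact Nat.mul_le_mul (by nlinarith [Nat.one_le_iff_ne_zero.mpr hcc.1])
          (by nlinarith [Nat.one_le_iff_ne_zero.mpr hcc.2])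

theorem pow (hf : Represents b f) (hg : Represents b' g) :
    Represents (B4.pow b b') (fun n => f n ^ g n) := by
  obtain rfl | hb := eq_or_ne b e1
  · exact of_forall_eq_one fun n => by simp [hf.eq_one n]
  obtain rfl | hb' := eq_or_ne b' e1
  · simpa [pow_e1, hg.eq_one] using hf
  by_cases h22 : b = e2 ∧ b' = e2
  · obtain ⟨rfl, rfl⟩ := h22
    obtain ⟨d, hd, hf⟩ := hf.exists_eq_const
    obtain ⟨d', hd', hg⟩ := hg.exists_eq_const
    have hdd : 2 ≤ d ^ d' := hd.trans (Nat.le_self_pow (by omega) d)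
    exact of_forall_eq_const hdd fun n => by rw [hf, hg]
  rw [pow_eq_einf hb hb' h22]
  refine .big ?_
  by_cases hb2 : b = e2
  · subst hb2
    obtain ⟨d, hd, hf⟩ := hf.exists_eq_const
    filter_upwards [hg.eventually_succ_le hb' (by tauto), eventually_ge_atTop 3] with n hn h3
    calc (n + 1) ^ 2 ≤ 2 ^ (n + 1) := Nat.sq_le_two_pow (by omega)
      _ ≤ d ^ (n + 1) := Nat.pow_le_pow_left hd _
      _ ≤ f n ^ g n := by rw [hf]; exact Nat.pow_le_pow_right (by omega) hn
  · filter_upwards [hf.eventually_succ_le hb hb2, hg.eventually_two_le hb'] with n hn hn'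
    calc (n + 1) ^ 2 ≤ (n + 1) ^ g n := Nat.pow_le_pow_right n.succ_pos hn'
      _ ≤ f n ^ g n := Nat.pow_le_pow_left hn _

theorem eq_einf_of_eventually (h : Represents b f)
    (hf : ∀ᶠ n in atTop, (n + 1) ^ 2 ≤ f n) : b = einf := by
  cases h with
  | @affine c d _ _ hf' =>
    exact absurd (hf.mono fun n hn => hf' n ▸ hn) (not_eventually_sq_le_affine c d)
  | big => rfl

theorem unique (hf : Represents b f) (hf' : Represents b' f) : b = b' := by
  cases hf with
  | big hbig => exact (hf'.eq_einf_of_eventually hbig).symm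
  | @affine c d _ hcd hf =>
    cases hf' with
    | big hbig => exact (affine hcd hf).eq_einf_of_eventually hbig
    | @affine c' d' _ _ hf' =>
      have h0 := (hf 0).symm.trans (hf' 0)
      have h1 := (hf 1).symm.trans (hf' 1)
      obtain ⟨rfl, rfl⟩ : c = c' ∧ d = d' := by omega
      rfl

end Represents

def sample : B4 → ℕ → ℕ
  | e1 => fun _ => 1
  | e2 => fun _ => 2
  | ea => fun n => n + 1
  | einf => fun n => n + 2

theorem sample_pos (b : B4) (n : ℕ) : 0 < sample b n := by
  cases b <;> simp [sample]

theorem represents_sample (b : B4) : Represents b (sample b) := by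
  cases b
  · exact .of_forall_eq_one fun _ => rfl
  · exact .of_forall_eq_const le_rfl fun _ => rfl
  · exact .affine (c := 1) (d := 0) one_pos fun n => by simp [sample]
  · exact .affine (c := 1) (d := 1) two_pos fun n => by simp [sample]

end B4

open B4 in
theorem PTerm.represents_evalB {m : ℕ} (u : PTerm m) {φ : Fin m → B4} {χ : Fin m → ℕ → ℕ}
    (hχ : ∀ i, Represents (φ i) (χ i)) :
    Represents (u.evalB φ) (fun n => u.evalN fun i => χ i n) := by
  induction u with
  | var i => exact hχ i
  | one => exact .of_forall_eq_one fun _ => rfl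
  | add s t hs ht => exact hs.add ht
  | mul s t hs ht => exact hs.mul ht
  | pow s t hs ht => exact hs.pow ht

/-- Every equation valid in ⟨ℕ; +, ·, ↑, 1⟩ (the positive natural numbers)
holds in the four-element algebra B⁻. -/
theorem stmt2 {m : ℕ} (s t : PTerm m)
    (h : ∀ φ : Fin m → ℕ, (∀ i, 0 < φ i) → s.evalN φ = t.evalN φ) :
    ∀ φ : Fin m → B4, s.evalB φ = t.evalB φ := by
  intro φ
  have hχ : ∀ i, B4.Represents (φ i) (B4.sample (φ i)) := fun i => B4.represents_sample (φ i)
  have hst : (fun n => s.evalN fun i => B4.sample (φ i) n) =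
      fun n => t.evalN fun i => B4.sample (φ i) n :=
    funext fun n => h _ fun i => B4.sample_pos (φ i) n
  exact (s.represents_evalB hχ).unique (hst ▸ t.represents_evalB hχ)
end

section
/- Let S be the set of functions ℕ → ℕ that arise as evaluations of one-variable terms built from the variable x using only the operations + and ! (factorial), and let ≺ be the eventual strict dominance relation on S. Then (S, ≺) is a well-order whose order type is exactly ε₀, the least ordinal ε satisfying ω^ε = ε. -/
/-- One-variable terms in the signature {+, !}. -/
inductive FTerm : Type
  | x : FTerm
  | add : FTerm → FTerm → FTerm
  | fact : FTerm → FTerm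

/-- Evaluation over ℕ: + is addition and ! is the factorial. -/
def FTerm.eval : FTerm → ℕ → ℕ
  | .x, n => n
  | .add s t, n => s.eval n + t.eval n
  | .fact s, n => Nat.factorial (s.eval n)

/-- The set S of functions ℕ → ℕ arising as evaluations of {+,!}-terms. -/
def S10 : Type := {f : ℕ → ℕ // ∃ t : FTerm, ∀ n, t.eval n = f n}

/-- Eventual strict dominance: s ≺ t iff s(x) < t(x) for all sufficiently large x. -/
def EvDom (s t : ℕ → ℕ) : Prop := ∃ x₀ : ℕ, ∀ x > x₀, s x < t x

/-- The eventual dominance relation on S. -/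
def r10 (a b : S10) : Prop := EvDom a.1 b.1

/-- ε₀: the least ordinal ε with ω^ε = ε. -/
noncomputable def eps0 : Ordinal := sInf {o : Ordinal | Ordinal.omega0 ^ o = o}

/-!
Each term `t` gets an ordinal `t.ord < ε₀`: `x ↦ 1`, `s + t ↦` the natural sum, `s ! ↦ ω ^ s.ord`.
Concretely `t.ord = ω ^ e₁ + ⋯ + ω ^ eₖ` with `e₁ ≥ ⋯ ≥ eₖ` the exponents of the summands of `t`
(`x` contributes `0`, `u !` contributes `u.ord`). To compare two terms, cancel equal leading
summands; the first differing leading summand on the larger side is a factorial `(v n)!`, and if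
`u n < v n` eventually then `(v n)! ≥ (u n + 1)!` eventually beats any fixed multiple of `(u n)!`.
By induction on the terms, `s ≺ t ↔ s.ord < t.ord` and equal ordinals give equal functions.
Conversely every ordinal in `[1, ε₀)` is attained, by induction along its Cantor normal form, as
every exponent `e` of an ordinal below `ε₀` satisfies `e < ω ^ e`. Hence `a ↦ a.ord - 1` is an
isomorphism of `(S, ≺)` onto `ε₀`.
-/

open Ordinal Filter
open scoped Nat

theorem Nat.mul_lt_factorial_self {k n : ℕ} (h : k + 2 ≤ n) : k * n < n ! := by
  obtain ⟨m, rfl⟩ : ∃ m, n = m + 1 := ⟨n - 1, by omega⟩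
  rw [Nat.factorial_succ, mul_comm]
  exact Nat.mul_lt_mul_of_pos_left ((show k < m by omega).trans_le (Nat.self_le_factorial m))
    (Nat.succ_pos m)

theorem Nat.mul_factorial_lt_factorial {k a b : ℕ} (hk : k ≤ a) (hab : a < b) : k * a ! < b ! :=
  calc k * a ! < (a + 1) * a ! := Nat.mul_lt_mul_of_pos_right (by omega) (Nat.factorial_pos a)
    _ = (a + 1)! := (Nat.factorial_succ a).symm
    _ ≤ b ! := Nat.factorial_le hab

theorem Multiset.exists_max_image_cons {α R : Type*} [LinearOrder R] (r : α → R)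
    {m : Multiset α} (hm : m ≠ 0) : ∃ a m', m = a ::ₘ m' ∧ ∀ b ∈ m', r b ≤ r a := by
  obtain ⟨a, ha, hmax⟩ := m.exists_max_image r hm
  obtain ⟨m', rfl⟩ := Multiset.exists_cons_of_mem ha
  exact ⟨a, m', rfl, fun b hb => hmax b (Multiset.mem_cons_of_mem hb)⟩

theorem Multiset.sum_map_lt_of_forall_card_mul_lt {A : Type*} {P : Multiset A} (hP : P ≠ 0)
    {g : A → ℕ} {b : ℕ} (h : ∀ a ∈ P, P.card * g a < b) : (P.map g).sum < b := by
  refine Nat.lt_of_mul_lt_mul_left (a := P.card) ?_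
  calc P.card * (P.map g).sum = (P.map fun a => P.card * g a).sum := Multiset.sum_map_mul_left.symm
    _ < (P.map fun _ => b).sum := Multiset.sum_lt_sum_of_nonempty hP h
    _ = P.card * b := by simp

namespace Ordinal

noncomputable def omegaPowSum (m : Multiset Ordinal) : Ordinal :=
  ((m.sort (· ≥ ·)).map (ω ^ ·)).sum

@[simp] theorem omegaPowSum_zero : omegaPowSum 0 = 0 := by
  simp [omegaPowSum]

theorem omegaPowSum_cons {m : Multiset Ordinal} {e : Ordinal} (he : ∀ a ∈ m, a ≤ e) :
    omegaPowSum (e ::ₘ m) = ω ^ e + omegaPowSum m := by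
  rw [omegaPowSum, Multiset.sort_cons e m _ he, List.map_cons, List.sum_cons, omegaPowSum]

theorem omegaPowSum_lt_opow {m : Multiset Ordinal} {c : Ordinal} (h : ∀ a ∈ m, a < c) :
    omegaPowSum m < ω ^ c := by
  induction m using Multiset.strongInductionOn with
  | _ m ih =>
  rcases eq_or_ne m 0 with rfl | hm
  · simpa using opow_pos c omega0_pos
  obtain ⟨e, m, rfl, hmax⟩ := Multiset.exists_max_image_cons id hm
  rw [omegaPowSum_cons (e := e) hmax]
  exact isPrincipal_add_omega0_opow c
    ((opow_lt_opow_iff_right one_lt_omega0).2 (h e (Multiset.mem_cons_self e m)))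
    (ih m (Multiset.lt_cons_self m e) fun a ha => h a (Multiset.mem_cons_of_mem ha))

theorem opow_le_omegaPowSum {m : Multiset Ordinal} {e : Ordinal} (he : e ∈ m) :
    ω ^ e ≤ omegaPowSum m := by
  have hm : m ≠ 0 := by rintro rfl; simp at he
  obtain ⟨a, m, rfl, hmax⟩ := Multiset.exists_max_image_cons id hm
  rw [omegaPowSum_cons (e := a) hmax]
  refine le_trans ?_ le_self_add
  rcases Multiset.mem_cons.1 he with rfl | he
  · exact le_rfl
  · exact opow_le_opow_right omega0_pos (hmax e he)

theorem omegaPowSum_eq_zero_iff {m : Multiset Ordinal} : omegaPowSum m = 0 ↔ m = 0 := by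
  refine ⟨fun h => ?_, fun h => h ▸ omegaPowSum_zero⟩
  by_contra hm
  obtain ⟨e, he⟩ := Multiset.exists_mem_of_ne_zero hm
  exact (opow_pos e omega0_pos).ne' (nonpos_iff_eq_zero.1 (h ▸ opow_le_omegaPowSum he))

theorem omegaPowSum_lt_epsilon_zero {m : Multiset Ordinal} (h : ∀ e ∈ m, e < ε₀) :
    omegaPowSum m < ε₀ :=
  omega0_opow_epsilon 0 ▸ omegaPowSum_lt_opow h

theorem add_lt_epsilon_zero {a b : Ordinal} (ha : a < ε₀) (hb : b < ε₀) : a + b < ε₀ := by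
  rw [← omega0_opow_epsilon] at *
  exact isPrincipal_add_omega0_opow _ ha hb

theorem lt_omega0_opow_self_of_lt_epsilon_zero {o : Ordinal} (h : o < ε₀) : o < ω ^ o :=
  lt_of_not_ge fun h' => h.not_ge (epsilon_zero_le_of_omega0_opow_le h')

theorem exists_omegaPowSum_eq (β : Ordinal) : ∃ m, omegaPowSum m = β := by
  induction β using WellFoundedLT.induction with
  | _ β ih =>
  rcases eq_or_ne β 0 with rfl | hβ
  · exact ⟨0, omegaPowSum_zero⟩
  set γ := log ω β
  obtain ⟨m, hm⟩ := ih _ (sub_omega0_opow_log_lt hβ)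
  have hle : ∀ e ∈ m, e ≤ γ := fun e he => Order.lt_succ_iff.1 <|
    (opow_lt_opow_iff_right one_lt_omega0).1 <| calc
      ω ^ e ≤ β - ω ^ γ := hm ▸ opow_le_omegaPowSum he
      _ ≤ β := sub_le_self _ _
      _ < ω ^ Order.succ γ := lt_opow_succ_log_self one_lt_omega0 β
  refine ⟨γ ::ₘ m, ?_⟩
  rw [omegaPowSum_cons hle, hm, Ordinal.add_sub_cancel_of_le (opow_log_le_self ω hβ)]

section Domination

variable {A : Type*} (r : A → Ordinal) (f : A → ℕ → ℕ)

theorem omegaPowSum_map_lt_of_forall_lt {P Q : Multiset A} {q : A} (hq : q ∈ Q)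
    (h : ∀ a ∈ P, r a < r q) : omegaPowSum (P.map r) < omegaPowSum (Q.map r) :=
  calc omegaPowSum (P.map r) < ω ^ r q := omegaPowSum_lt_opow (by simpa using h)
    _ ≤ omegaPowSum (Q.map r) := opow_le_omegaPowSum (Multiset.mem_map_of_mem r hq)

theorem sum_map_eq_of_omegaPowSum_eq {P Q : Multiset A}
    (hf : ∀ a ∈ P, ∀ b ∈ Q, r a = r b → f a = f b)
    (h : omegaPowSum (P.map r) = omegaPowSum (Q.map r)) (n : ℕ) :
    (P.map (f · n)).sum = (Q.map (f · n)).sum := by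
  induction P using Multiset.strongInductionOn generalizing Q with
  | _ P ih =>
  rcases eq_or_ne P 0 with rfl | hP
  · simp_all [eq_comm (a := (0 : Ordinal)), omegaPowSum_eq_zero_iff]
  rcases eq_or_ne Q 0 with rfl | hQ
  · simp_all [omegaPowSum_eq_zero_iff]
  obtain ⟨p, P, rfl, hp⟩ := P.exists_max_image_cons r hP
  obtain ⟨q, Q, rfl, hq⟩ := Q.exists_max_image_cons r hQ
  have hp' : ∀ a ∈ p ::ₘ P, r a ≤ r p := Multiset.forall_mem_cons.2 ⟨le_rfl, hp⟩
  have hq' : ∀ b ∈ q ::ₘ Q, r b ≤ r q := Multiset.forall_mem_cons.2 ⟨le_rfl, hq⟩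
  have hpq : r p = r q := by
    by_contra hne
    rcases lt_or_gt_of_ne hne with hlt | hlt
    · exact (omegaPowSum_map_lt_of_forall_lt r (Multiset.mem_cons_self q Q) fun a ha =>
        (hp' a ha).trans_lt hlt).ne h
    · exact (omegaPowSum_map_lt_of_forall_lt r (Multiset.mem_cons_self p P) fun a ha =>
        (hq' a ha).trans_lt hlt).ne' h
  rw [Multiset.map_cons, Multiset.map_cons, omegaPowSum_cons (by simpa using hp),
    omegaPowSum_cons (by simpa using hq), hpq, add_right_inj] at h
  have hrest := ih P (Multiset.lt_cons_self P p)
    (fun a ha b hb => hf a (Multiset.mem_cons_of_mem ha) b (Multiset.mem_cons_of_mem hb)) h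
  simp only [Multiset.map_cons, Multiset.sum_cons, hrest,
    hf p (Multiset.mem_cons_self p P) q (Multiset.mem_cons_self q Q) hpq]

theorem eventually_sum_map_lt_of_omegaPowSum_lt {P Q : Multiset A}
    (hpos : ∀ b ∈ Q, ∀ᶠ n in atTop, 0 < f b n)
    (hdom : ∀ a ∈ P, ∀ b ∈ Q, r a < r b → ∀ k, ∀ᶠ n in atTop, k * f a n < f b n)
    (hf : ∀ a ∈ P, ∀ b ∈ Q, r a = r b → f a = f b)
    (h : omegaPowSum (P.map r) < omegaPowSum (Q.map r)) :
    ∀ᶠ n in atTop, (P.map (f · n)).sum < (Q.map (f · n)).sum := by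
  induction P using Multiset.strongInductionOn generalizing Q with
  | _ P ih =>
  rcases eq_or_ne Q 0 with rfl | hQ
  · simp at h
  obtain ⟨q, Q, rfl, hq⟩ := Q.exists_max_image_cons r hQ
  have hqQ := Multiset.mem_cons_self q Q
  have hle_sum (n : ℕ) : f q n ≤ ((q ::ₘ Q).map (f · n)).sum := by simp
  rcases eq_or_ne P 0 with rfl | hP
  · filter_upwards [hpos q hqQ] with n hn using by simpa using hn.trans_le (hle_sum n)
  obtain ⟨p, P, rfl, hp⟩ := P.exists_max_image_cons r hP
  have hpP := Multiset.mem_cons_self p P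
  have hp' : ∀ a ∈ p ::ₘ P, r a ≤ r p := Multiset.forall_mem_cons.2 ⟨le_rfl, hp⟩
  rcases lt_trichotomy (r p) (r q) with hlt | heq | hgt
  · have hdom' : ∀ᶠ n in atTop, ∀ a ∈ p ::ₘ P, (p ::ₘ P).card * f a n < f q n :=
      (eventually_all_finite (p ::ₘ P).finite_toSet).2 fun a ha =>
        hdom a ha q hqQ ((hp' a ha).trans_lt hlt) _
    filter_upwards [hdom'] with n hn using
      (Multiset.sum_map_lt_of_forall_card_mul_lt (Multiset.cons_ne_zero) hn).trans_le (hle_sum n)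
  · rw [Multiset.map_cons, Multiset.map_cons, omegaPowSum_cons (by simpa using hp),
      omegaPowSum_cons (by simpa using hq), heq, add_lt_add_iff_left] at h
    have hrest := ih P (Multiset.lt_cons_self P p)
      (fun b hb => hpos b (Multiset.mem_cons_of_mem hb))
      (fun a ha b hb => hdom a (Multiset.mem_cons_of_mem ha) b (Multiset.mem_cons_of_mem hb))
      (fun a ha b hb => hf a (Multiset.mem_cons_of_mem ha) b (Multiset.mem_cons_of_mem hb)) h
    filter_upwards [hrest] with n hn
    simpa [hf p hpP q hqQ heq] using hn
  · have hq' : ∀ b ∈ q ::ₘ Q, r b ≤ r q := Multiset.forall_mem_cons.2 ⟨le_rfl, hq⟩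
    exact absurd h (omegaPowSum_map_lt_of_forall_lt r hpP fun b hb =>
      (hq' b hb).trans_lt hgt).not_gt

end Domination

end Ordinal

theorem evDom_iff_eventually {f g : ℕ → ℕ} : EvDom f g ↔ ∀ᶠ n in atTop, f n < g n := by
  simp [EvDom, atTop_basis_Ioi.eventually_iff]

namespace FTerm

/-- The exponents of the Cantor normal form of `t.ord`: `(s + t).ord` is the natural (Hessenberg)
sum of `s.ord` and `t.ord`, and `(s !).ord = ω ^ s.ord`. -/
noncomputable def exponents : FTerm → Multiset Ordinal.{0}
  | x => {0}
  | add s t => s.exponents + t.exponents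
  | fact s => {omegaPowSum s.exponents}

noncomputable def ord (t : FTerm) : Ordinal.{0} := omegaPowSum t.exponents

def summands : FTerm → Multiset FTerm
  | x => {x}
  | add s t => s.summands + t.summands
  | fact s => {fact s}

/-- Only meaningful on summands, i.e. on `x` and factorials; it is `0` on sums. -/
noncomputable def exponent : FTerm → Ordinal.{0}
  | fact s => s.ord
  | _ => 0

theorem exponents_eq_map_summands (t : FTerm) : t.exponents = t.summands.map exponent := by
  induction t with
  | x => rfl
  | add s t hs ht => simp [exponents, summands, hs, ht]
  | fact s _ => rfl

theorem eval_eq_sum_summands (t : FTerm) (n : ℕ) : t.eval n = (t.summands.map (eval · n)).sum := by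
  induction t with
  | x => simp [summands]
  | add s t hs ht => simp [eval, summands, hs, ht]
  | fact s _ => simp [summands]

theorem mem_summands {a t : FTerm} (h : a ∈ t.summands) :
    a = x ∨ ∃ u, a = fact u ∧ sizeOf u < sizeOf t := by
  induction t with
  | x => simp_all [summands]
  | add s t hs ht =>
    rcases Multiset.mem_add.1 h with h | h <;> grind
  | fact s _ => simp_all [summands]

theorem le_eval (t : FTerm) (n : ℕ) : n ≤ t.eval n := by
  induction t with
  | x => exact le_rfl
  | add s t hs _ => exact hs.trans (Nat.le_add_right _ _)
  | fact s hs => exact hs.trans (Nat.self_le_factorial _)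

theorem ord_ne_zero (t : FTerm) : t.ord ≠ 0 := by
  rw [ord, Ne, omegaPowSum_eq_zero_iff]
  induction t with
  | x => simp [exponents]
  | add s t hs _ => simp [exponents, hs]
  | fact s _ => simp [exponents]

theorem ord_controls_eval (s t : FTerm) :
    (s.ord < t.ord → ∀ᶠ n in atTop, s.eval n < t.eval n) ∧ (s.ord = t.ord → s.eval = t.eval) := by
  have ih (u v : FTerm) (hu : sizeOf u < sizeOf s) (hv : sizeOf v < sizeOf t) :=
    ord_controls_eval u v
  have hf : ∀ a ∈ s.summands, ∀ b ∈ t.summands, a.exponent = b.exponent → a.eval = b.eval := by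
    intro a ha b hb hab
    rcases mem_summands ha with rfl | ⟨u, rfl, hu⟩ <;>
      rcases mem_summands hb with rfl | ⟨v, rfl, hv⟩ <;> simp only [exponent] at hab
    · rfl
    · exact absurd hab.symm (ord_ne_zero v)
    · exact absurd hab (ord_ne_zero u)
    · funext n; simp [eval, (ih u v hu hv).2 hab]
  have hdom : ∀ a ∈ s.summands, ∀ b ∈ t.summands, a.exponent < b.exponent →
      ∀ k, ∀ᶠ n in atTop, k * a.eval n < b.eval n := by
    intro a ha b hb hab k
    rcases mem_summands ha with rfl | ⟨u, rfl, hu⟩ <;>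
      rcases mem_summands hb with rfl | ⟨v, rfl, hv⟩ <;> simp only [exponent] at hab
    · exact absurd hab (lt_irrefl 0)
    · filter_upwards [eventually_ge_atTop (k + 2)] with n hn using
        (Nat.mul_lt_factorial_self hn).trans_le (Nat.factorial_le (le_eval v n))
    · exact absurd hab zero_le.not_gt
    · filter_upwards [(ih u v hu hv).1 hab, eventually_ge_atTop k] with n huv hk using
        Nat.mul_factorial_lt_factorial (hk.trans (le_eval u n)) huv
  have hpos : ∀ b ∈ t.summands, ∀ᶠ n in atTop, 0 < b.eval n := fun b _ =>
    (eventually_gt_atTop 0).mono fun n hn => hn.trans_le (le_eval b n)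
  simp only [ord, exponents_eq_map_summands]
  refine ⟨fun h => ?_, fun h => funext fun n => ?_⟩
  · simpa only [← eval_eq_sum_summands] using
      eventually_sum_map_lt_of_omegaPowSum_lt exponent eval hpos hdom hf h
  · simpa only [← eval_eq_sum_summands] using sum_map_eq_of_omegaPowSum_eq exponent eval hf h n
termination_by sizeOf s + sizeOf t

theorem eventually_eval_lt_of_ord_lt {s t : FTerm} (h : s.ord < t.ord) :
    ∀ᶠ n in atTop, s.eval n < t.eval n :=
  (ord_controls_eval s t).1 h

theorem eval_eq_of_ord_eq {s t : FTerm} (h : s.ord = t.ord) : s.eval = t.eval :=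
  (ord_controls_eval s t).2 h

theorem ord_eq_of_eval_eq {s t : FTerm} (h : s.eval = t.eval) : s.ord = t.ord := by
  rcases lt_trichotomy s.ord t.ord with hlt | heq | hgt
  · obtain ⟨n, hn⟩ := (eventually_eval_lt_of_ord_lt hlt).exists
    exact absurd (congrFun h n) hn.ne
  · exact heq
  · obtain ⟨n, hn⟩ := (eventually_eval_lt_of_ord_lt hgt).exists
    exact absurd (congrFun h n) hn.ne'

theorem evDom_eval_iff (s t : FTerm) : EvDom s.eval t.eval ↔ s.ord < t.ord := by
  rw [evDom_iff_eventually]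
  refine ⟨fun h => lt_of_not_ge fun hle => ?_, eventually_eval_lt_of_ord_lt⟩
  rcases hle.lt_or_eq with hlt | heq
  · obtain ⟨n, hst, hts⟩ := (h.and (eventually_eval_lt_of_ord_lt hlt)).exists
    exact hst.asymm hts
  · obtain ⟨n, hn⟩ := h.exists
    exact hn.ne (congrFun (eval_eq_of_ord_eq heq.symm) n)

theorem exponents_lt_epsilon_zero (t : FTerm) : ∀ e ∈ t.exponents, e < ε₀ := by
  induction t with
  | x => simp [exponents]
  | add s t hs ht => simpa [exponents, or_imp, forall_and] using ⟨hs, ht⟩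
  | fact s hs => simpa [exponents] using omegaPowSum_lt_epsilon_zero hs

theorem ord_lt_epsilon_zero (t : FTerm) : t.ord < ε₀ :=
  omegaPowSum_lt_epsilon_zero t.exponents_lt_epsilon_zero

theorem exists_exponents_eq {m : Multiset Ordinal} (hm : m ≠ 0)
    (h : ∀ e ∈ m, e = 0 ∨ ∃ u : FTerm, u.ord = e) : ∃ t : FTerm, t.exponents = m := by
  induction m using Multiset.induction_on with
  | empty => exact absurd rfl hm
  | cons e m ih =>
    obtain ⟨a, ha⟩ : ∃ a : FTerm, a.exponents = {e} := by
      rcases h e (Multiset.mem_cons_self e m) with rfl | ⟨u, rfl⟩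
      exacts [⟨x, rfl⟩, ⟨fact u, rfl⟩]
    rcases eq_or_ne m 0 with rfl | hm'
    · exact ⟨a, ha⟩
    obtain ⟨t, ht⟩ := ih hm' fun e' he' => h e' (Multiset.mem_cons_of_mem he')
    exact ⟨add a t, by rw [exponents, ha, ht, Multiset.singleton_add]⟩

theorem exists_ord_eq {β : Ordinal} (h0 : β ≠ 0) (hβ : β < ε₀) : ∃ t : FTerm, t.ord = β := by
  induction β using WellFoundedLT.induction with
  | _ β ih =>
  obtain ⟨m, rfl⟩ := exists_omegaPowSum_eq β
  have hm : m ≠ 0 := fun h => h0 (omegaPowSum_eq_zero_iff.2 h)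
  obtain ⟨t, ht⟩ := exists_exponents_eq hm fun e he => by
    have hle : ω ^ e ≤ omegaPowSum m := opow_le_omegaPowSum he
    have he_lt : e < omegaPowSum m := (lt_omega0_opow_self_of_lt_epsilon_zero
      (((right_le_opow e one_lt_omega0).trans hle).trans_lt hβ)).trans_le hle
    rcases eq_or_ne e 0 with he0 | he0
    · exact Or.inl he0
    · exact Or.inr (ih e he_lt he0 (he_lt.trans hβ))
  exact ⟨t, by rw [ord, ht]⟩

end FTerm

namespace S10

noncomputable def ord (a : S10) : Ordinal.{0} := (Classical.choose a.2).ord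

theorem ord_eq_of_forall_eval_eq {a : S10} {t : FTerm} (ht : ∀ n, t.eval n = a.1 n) :
    a.ord = t.ord :=
  FTerm.ord_eq_of_eval_eq (funext fun n => (Classical.choose_spec a.2 n).trans (ht n).symm)

theorem r10_iff_ord_lt (a b : S10) : r10 a b ↔ a.ord < b.ord := by
  obtain ⟨s, hs⟩ := a.2
  obtain ⟨t, ht⟩ := b.2
  rw [ord_eq_of_forall_eval_eq hs, ord_eq_of_forall_eval_eq ht, ← FTerm.evDom_eval_iff, r10,
    ← funext hs, ← funext ht]

theorem ord_injective : Function.Injective ord := fun a b h => Subtype.ext <| funext fun n => by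
  rw [← Classical.choose_spec a.2 n, ← Classical.choose_spec b.2 n, FTerm.eval_eq_of_ord_eq h]

theorem one_le_ord (a : S10) : 1 ≤ a.ord :=
  Order.one_le_iff_ne_zero.2 (FTerm.ord_ne_zero _)

theorem ord_lt_epsilon_zero (a : S10) : a.ord < ε₀ := FTerm.ord_lt_epsilon_zero _

theorem exists_ord_eq {β : Ordinal} (h0 : β ≠ 0) (hβ : β < ε₀) : ∃ a : S10, a.ord = β := by
  obtain ⟨t, rfl⟩ := FTerm.exists_ord_eq h0 hβ
  exact ⟨⟨t.eval, t, fun _ => rfl⟩, ord_eq_of_forall_eval_eq fun _ => rfl⟩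

/-- Term ordinals lie in `[1, ε₀)`; left subtraction of `1` shifts this interval onto `[0, ε₀)`. -/
noncomputable def position (a : S10) : (ε₀).ToType :=
  ToType.mk ⟨a.ord - 1, Set.mem_Iio.2 ((Ordinal.sub_le_self _ _).trans_lt a.ord_lt_epsilon_zero)⟩

theorem position_lt_position_iff (a b : S10) : a.position < b.position ↔ r10 a b := by
  rw [position, position, OrderIso.lt_iff_lt, Subtype.mk_lt_mk, r10_iff_ord_lt,
    ← add_lt_add_iff_left 1, Ordinal.add_sub_cancel_of_le a.one_le_ord,
    Ordinal.add_sub_cancel_of_le b.one_le_ord]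

noncomputable def positionEmbedding : r10 ↪r ((· < ·) : (ε₀).ToType → (ε₀).ToType → Prop) where
  toFun := position
  inj' a b h := ord_injective <| by
    have := congrArg (1 + ·) (Subtype.ext_iff.1 (ToType.mk.injective h))
    simpa only [Ordinal.add_sub_cancel_of_le (one_le_ord _)] using this
  map_rel_iff' := position_lt_position_iff _ _

theorem position_surjective : Function.Surjective position := fun c => by
  obtain ⟨γ, hγ⟩ := ToType.mk.surjective c
  obtain ⟨a, ha⟩ := exists_ord_eq (β := 1 + γ) (by simp)
    (add_lt_epsilon_zero (by simpa using natCast_lt_epsilon 1 0) γ.2)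
  exact ⟨a, by rw [position, ← hγ]; congr; simp [ha]⟩

end S10

theorem eps0_eq_epsilon_zero : eps0 = ε₀ :=
  le_antisymm (csInf_le' (omega0_opow_epsilon 0))
    (le_csInf ⟨_, omega0_opow_epsilon 0⟩ fun _ ho => epsilon_zero_le_of_omega0_opow_le ho.le)

/-- (S, ≺) is a well-order of order type exactly ε₀. -/
theorem stmt10 : ∃ h : IsWellOrder S10 r10, @Ordinal.type S10 r10 h = eps0 := by
  have := S10.positionEmbedding.isWellOrder
  refine ⟨this, ?_⟩
  rw [(RelIso.ofSurjective S10.positionEmbedding S10.position_surjective).ordinalType_congr,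
    type_toType, eps0_eq_epsilon_zero]
end
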